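/- arXiv:0908.4499 — 9 statements merged into one kernel-verified Lean document; each statement's English description precedes it below -/
import Mathlib

section
/- Let V be a vector space over a field F, let Y1, Y2, Y3 be subsets of V, let X1 ⊆ Y1 and X2 ⊆ Y2, and let v ∈ span(Y3). Then v ∈ span(X1 ∪ X2) if and only if there exist v1 ∈ span(X1) ∩ span(Y2 ∪ Y3) and v2 ∈ span(X2) ∩ span(Y1 ∪ Y3) with v = v1 + v2. -/
namespace Submodule

variable {R M : Type*} [Ring R] [AddCommGroup M] [Module R M]

theorem left_mem_sup_of_add_mem {p q : Submodule R M} {a b : M} (hab : a + b ∈ p) (hb : b ∈ q) :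
    a ∈ q ⊔ p :=
  ((q ⊔ p).add_mem_iff_left (mem_sup_left hb)).mp (mem_sup_right hab)

theorem left_mem_span_union_of_add_mem_span {X Y Z : Set M} {a b : M} (hXY : X ⊆ Y)
    (hab : a + b ∈ span R Z) (hb : b ∈ span R X) : a ∈ span R (Y ∪ Z) := by
  rw [span_union]
  exact left_mem_sup_of_add_mem hab (span_mono hXY hb)

end Submodule

/-- Let `Y1, Y2, Y3` be subsets of an `F`-vector space `V`, `X1 ⊆ Y1`, `X2 ⊆ Y2`, and
`v ∈ span Y3`. Then `v ∈ span (X1 ∪ X2)` iff there exist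
`v1 ∈ span X1 ∩ span (Y2 ∪ Y3)` and `v2 ∈ span X2 ∩ span (Y1 ∪ Y3)` with `v = v1 + v2`. -/
theorem mem_span_union_iff_boundary_decomposition {F V : Type*} [Field F] [AddCommGroup V]
    [Module F V] (Y1 Y2 Y3 X1 X2 : Set V) (hX1 : X1 ⊆ Y1) (hX2 : X2 ⊆ Y2)
    (v : V) (hv : v ∈ Submodule.span F Y3) :
    v ∈ Submodule.span F (X1 ∪ X2) ↔
      ∃ v1 ∈ Submodule.span F X1 ⊓ Submodule.span F (Y2 ∪ Y3),
        ∃ v2 ∈ Submodule.span F X2 ⊓ Submodule.span F (Y1 ∪ Y3), v = v1 + v2 := by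
  rw [Submodule.span_union]
  constructor
  · intro h
    obtain ⟨v1, h1, v2, h2, rfl⟩ := Submodule.mem_sup.mp h
    refine ⟨v1, ⟨h1, Submodule.left_mem_span_union_of_add_mem_span hX2 hv h2⟩,
      v2, ⟨h2, Submodule.left_mem_span_union_of_add_mem_span hX1 ?_ h1⟩, rfl⟩
    rwa [add_comm] at hv
  · rintro ⟨v1, ⟨h1, -⟩, v2, ⟨h2, -⟩, rfl⟩
    exact Submodule.add_mem_sup h1 h2
end

section
/- Let M1 and M2 be matroids on disjoint finite ground sets S1 and S2, let p1 ∈ S1 and p2 ∈ S2 be elements that are not loops, and let p be an element not in S1 ∪ S2. Set E = (S1 \ {p1}) ∪ (S2 \ {p2}) ∪ {p}. Define C_S to be the collection of subsets of E consisting of: all circuits of M1 not containing p1, all circuits of M2 not containing p2, and all sets (C1 \ {p1}) ∪ (C2 \ {p2}) ∪ {p} where C1 is a circuit of M1 containing p1 and C2 is a circuit of M2 containing p2. Then there exists a matroid on E whose circuits are exactly the members of C_S (the series connection of M1 and M2). -/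
/-- A circuit of a matroid: a minimal dependent set. -/
def Matroid.Circuit' {α : Type*} (M : Matroid α) (C : Set α) : Prop :=
  M.Dep C ∧ ∀ D : Set α, D ⊂ C → ¬ M.Dep D

/-!
The series connection is the direct sum `M₁ ⊕ M₂` in which `p₁` and `p₂` are merged into the new
element `p`: a set containing `p` is independent when replacing `p` by `p₁` or by `p₂` makes it
independent in `M₁ ⊕ M₂`. Merging two elements of a finite matroid always gives a matroid. To
augment `I` from `J`, augment lifts of `I` and `J`; if the added element is the lift `d` of
`p ∈ J` while `p ∈ I`, relift `p ∈ I` to `d` and augment again: now the added element lies in `J`.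

Circuits avoiding `p` are those of `M₁ ⊕ M₂` avoiding `p₁` and `p₂`. A circuit `C ∋ p` contains,
for each `i`, a circuit `Cᵢ ∋ pᵢ` of `Mᵢ` inside `(C - p) + pᵢ`, and `(C₁ - p₁) ∪ (C₂ - p₂) + p`
is then a dependent subset of `C`, hence `C` itself.
-/

open Set Function

namespace Matroid

section General

variable {α : Type*} {M N : Matroid α} {h : Disjoint M.E N.E} {e : α} {C I X Y : Set α}

lemma circuit'_iff_isCircuit : M.Circuit' C ↔ M.IsCircuit C := by
  rw [isCircuit_iff_forall_ssubset, Circuit']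
  exact and_congr_right fun hC => forall₂_congr fun D hD =>
    not_dep_iff (hD.subset.trans hC.subset_ground)

lemma disjointSum_indep_union_iff (hX : X ⊆ M.E) (hY : Y ⊆ N.E) :
    (M.disjointSum N h).Indep (X ∪ Y) ↔ M.Indep X ∧ N.Indep Y := by
  rw [disjointSum_indep_iff, union_inter_distrib_right, union_inter_distrib_right,
    inter_eq_left.2 hX, inter_eq_left.2 hY, (h.mono_left hX).inter_eq,
    (h.symm.mono_left hY).inter_eq, union_empty, empty_union]
  exact ⟨fun h => ⟨h.1, h.2.1⟩, fun h => ⟨h.1, h.2, union_subset_union hX hY⟩⟩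

lemma disjointSum_restrict_left : (M.disjointSum N h) ↾ M.E = M := by
  refine ext_indep rfl fun I hI => ?_
  have hIM : I ⊆ M.E := hI
  rw [restrict_indep_iff, and_iff_left hIM]
  simpa using disjointSum_indep_union_iff (h := h) hIM (empty_subset _)

lemma disjointSum_restrict_right : (M.disjointSum N h) ↾ N.E = N := by
  rw [disjointSum_comm]
  exact disjointSum_restrict_left

lemma IsCircuit.subset_or_subset_of_disjointSum (hC : (M.disjointSum N h).IsCircuit C) :
    C ⊆ M.E ∨ C ⊆ N.E := by
  by_contra! hCMN
  refine hC.not_indep (disjointSum_indep_iff.2 ⟨?_, ?_, by simpa using hC.subset_ground⟩)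
  · have := hC.ssubset_indep (inter_ssubset_left_iff.2 hCMN.1)
    simpa [inter_assoc] using (disjointSum_indep_iff.1 this).1
  · have := hC.ssubset_indep (inter_ssubset_left_iff.2 hCMN.2)
    simpa [inter_assoc] using (disjointSum_indep_iff.1 this).2.1

lemma disjointSum_isCircuit_iff :
    (M.disjointSum N h).IsCircuit C ↔ M.IsCircuit C ∨ N.IsCircuit C := by
  have hM := restrict_isCircuit_iff (M := M.disjointSum N h) (R := M.E) (C := C) (by simp)
  have hN := restrict_isCircuit_iff (M := M.disjointSum N h) (R := N.E) (C := C) (by simp)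
  rw [disjointSum_restrict_left] at hM
  rw [disjointSum_restrict_right] at hN
  rw [hM, hN, ← and_or_left]
  exact ⟨fun hC => ⟨hC, hC.subset_or_subset_of_disjointSum⟩, And.left⟩

lemma IsCircuit.disjointSum_indep_of_subset (hC : M.IsCircuit C) (hX : N.Indep X) (he : e ∈ C)
    (hY : Y ⊆ (C ∪ X) \ {e}) : (M.disjointSum N h).Indep Y := by
  refine ((disjointSum_indep_union_iff (sdiff_subset.trans hC.subset_ground)
    hX.subset_ground).2 ⟨hC.sdiff_singleton_indep he, hX⟩).subset ?_
  rw [union_sdiff_distrib] at hY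
  exact hY.trans (union_subset_union_right _ sdiff_subset)

lemma Indep.exists_isCircuit_of_not_indep_insert (hI : M.Indep I)
    (he : e ∈ M.E) (heI : ¬ M.Indep (insert e I)) : ∃ C ⊆ insert e I, M.IsCircuit C ∧ e ∈ C := by
  rw [not_indep_iff (insert_subset he hI.subset_ground), hI.insert_dep_iff] at heI
  exact exists_isCircuit_of_mem_closure heI.1 heI.2

end General

section Merge

variable {α : Type*} [DecidableEq α] {Q : Matroid α} {a b c p x : α} {C I J : Set α}

lemma image_update_id_of_notMem (hpI : p ∉ I) : update id p c '' I = I := by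
  rw [image_congr (g := id) fun x hx => update_of_ne (ne_of_mem_of_not_mem hx hpI) _ _, image_id]

lemma image_update_id_insert_of_ne (hxp : x ≠ p) :
    update id p c '' insert x I = insert x (update id p c '' I) := by
  rw [image_insert_eq, update_of_ne hxp, id]

lemma image_update_id_insert_self :
    update id p c '' insert p I = insert c (update id p c '' I) := by
  rw [image_insert_eq, update_self]

lemma image_update_id_subset_insert (d : α) :
    update id p d '' I ⊆ insert d (update id p c '' I) := by
  rintro _ ⟨x, hx, rfl⟩
  obtain rfl | hxp := eq_or_ne x p
  · simp
  · exact mem_insert_of_mem _ ⟨x, hx, by simp [update_of_ne hxp]⟩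

lemma mem_image_update_id_of_mem (hxp : x ≠ p) (hx : x ∈ I) : x ∈ update id p c '' I :=
  ⟨x, hx, by simp [update_of_ne hxp]⟩

lemma injOn_update_id (hcI : c ∉ I \ {p}) : InjOn (update id p c) I := by
  intro x hx y hy hxy
  by_cases hxp : x = p <;> by_cases hyp : y = p
  · rw [hxp, hyp]
  · rw [hxp, update_self, update_of_ne hyp, id] at hxy
    exact absurd ⟨hy, hyp⟩ (hxy ▸ hcI)
  · rw [hyp, update_self, update_of_ne hxp, id] at hxy
    exact absurd ⟨hx, hxp⟩ (hxy.symm ▸ hcI)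
  · rwa [update_of_ne hxp, update_of_ne hyp] at hxy

/-- Independence after merging `a` and `b` into `p`: replacing `p` (if present) by `a` or by `b`
gives a `Q`-independent set. -/
def MergeIndep (Q : Matroid α) (a b p : α) (I : Set α) : Prop :=
  I ⊆ insert p (Q.E \ {a, b}) ∧ ∃ c ∈ ({a, b} : Set α), Q.Indep (update id p c '' I)

lemma mergeIndep_empty : MergeIndep Q a b p ∅ :=
  ⟨empty_subset _, a, mem_insert _ _, by simp⟩

lemma MergeIndep.subset (hJ : MergeIndep Q a b p J) (hIJ : I ⊆ J) : MergeIndep Q a b p I :=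
  let ⟨hJE, c, hc, hJc⟩ := hJ
  ⟨hIJ.trans hJE, c, hc, hJc.subset (image_mono hIJ)⟩

lemma encard_image_update_id (hIE : I ⊆ insert p (Q.E \ {a, b})) (hc : c ∈ ({a, b} : Set α)) :
    (update id p c '' I).encard = I.encard :=
  (injOn_update_id fun hcI => ((hIE hcI.1).resolve_left hcI.2).2 hc).encard_image

lemma mergeIndep_insert_of_ne (hIE : I ⊆ insert p (Q.E \ {a, b}))
    (hxE : x ∈ insert p (Q.E \ {a, b})) (hxp : x ≠ p) (hc : c ∈ ({a, b} : Set α))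
    (hxI : Q.Indep (insert x (update id p c '' I))) : MergeIndep Q a b p (insert x I) :=
  ⟨insert_subset hxE hIE, c, hc, by rwa [image_update_id_insert_of_ne hxp]⟩

lemma MergeIndep.exists_insert_of_encard_lt (hI : MergeIndep Q a b p I)
    (hJ : MergeIndep Q a b p J) (hIJ : I.encard < J.encard) :
    ∃ x ∈ J, x ∉ I ∧ MergeIndep Q a b p (insert x I) := by
  obtain ⟨hIE, c, hc, hIc⟩ := hI
  obtain ⟨hJE, d, hd, hJd⟩ := hJ
  have hlt : ∀ c ∈ ({a, b} : Set α), (update id p c '' I).encard < (update id p d '' J).encard :=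
    fun c hc => by rwa [encard_image_update_id hIE hc, encard_image_update_id hJE hd]
  obtain ⟨_, ⟨⟨x, hxJ, rfl⟩, hxI⟩, hins⟩ := hIc.augment hJd (hlt c hc)
  obtain rfl | hxp := eq_or_ne p x
  · rw [update_self] at hins hxI
    by_cases hpI : p ∈ I
    · obtain ⟨_, ⟨⟨y, hyJ, rfl⟩, hyI⟩, hins'⟩ :=
        (hins.subset (image_update_id_subset_insert d)).augment hJd (hlt d hd)
      have hyp : y ≠ p := by rintro rfl; exact hyI ⟨y, hpI, rfl⟩
      rw [update_of_ne hyp, id] at hins' hyI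
      exact ⟨y, hyJ, fun hy => hyI (mem_image_update_id_of_mem hyp hy),
        mergeIndep_insert_of_ne hIE (hJE hyJ) hyp hd hins'⟩
    · refine ⟨p, hxJ, hpI, insert_subset (mem_insert _ _) hIE, d, hd, ?_⟩
      rw [image_update_id_insert_self, image_update_id_of_notMem hpI]
      rwa [image_update_id_of_notMem hpI] at hins
  · rw [update_of_ne hxp.symm, id] at hins hxI
    exact ⟨x, hxJ, fun hx => hxI (mem_image_update_id_of_mem hxp.symm hx),
      mergeIndep_insert_of_ne hIE (hJE hxJ) hxp.symm hc hins⟩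

def merge (Q : Matroid α) (hQ : Q.E.Finite) (a b p : α) : Matroid α :=
  have hE : (insert p (Q.E \ {a, b})).Finite := hQ.sdiff.insert p
  (IndepMatroid.ofFinite hE (MergeIndep Q a b p) mergeIndep_empty
    (fun _ _ hJ hIJ => hJ.subset hIJ)
    (fun _ _ hI hJ hIJ => hI.exists_insert_of_encard_lt hJ <| by
      rwa [← (hE.subset hI.1).cast_ncard_eq, ← (hE.subset hJ.1).cast_ncard_eq, Nat.cast_lt])
    (fun _ hI => hI.1)).matroid

variable {hQ : Q.E.Finite}

@[simp] lemma merge_ground : (Q.merge hQ a b p).E = insert p (Q.E \ {a, b}) := rfl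

lemma merge_indep_iff : (Q.merge hQ a b p).Indep I ↔ MergeIndep Q a b p I := Iff.rfl

lemma merge_indep_iff_of_notMem (hpI : p ∉ I) :
    (Q.merge hQ a b p).Indep I ↔ Q.Indep I ∧ Disjoint I {a, b} := by
  simp only [merge_indep_iff, MergeIndep, image_update_id_of_notMem hpI,
    subset_insert_iff_of_notMem hpI, subset_sdiff]
  exact ⟨fun ⟨⟨_, hab⟩, _, _, hI⟩ => ⟨hI, hab⟩,
    fun ⟨hI, hab⟩ => ⟨⟨hI.subset_ground, hab⟩, a, mem_insert _ _, hI⟩⟩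

lemma merge_indep_insert_iff (hpI : p ∉ I) :
    (Q.merge hQ a b p).Indep (insert p I) ↔
      Disjoint I {a, b} ∧ (Q.Indep (insert a I) ∨ Q.Indep (insert b I)) := by
  simp only [merge_indep_iff, MergeIndep, image_update_id_insert_self,
    image_update_id_of_notMem hpI, insert_subset_insert_iff hpI, subset_sdiff,
    exists_mem_insert, mem_singleton_iff, exists_eq_left]
  refine ⟨fun ⟨⟨_, hab⟩, hI⟩ => ⟨hab, hI⟩, fun ⟨hab, hI⟩ => ⟨⟨?_, hab⟩, hI⟩⟩
  rcases hI with hI | hI <;> exact (subset_insert _ _).trans hI.subset_ground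

lemma merge_delete_eq (hp : p ∉ Q.E) : Q.merge hQ a b p ＼ {p} = Q ＼ {a, b} := by
  refine ext_indep ?_ fun I _ => ?_
  · rw [delete_ground, delete_ground, merge_ground, insert_sdiff_self_of_notMem fun h => hp h.1]
  · rw [delete_indep_iff, delete_indep_iff, disjoint_singleton_right]
    refine ⟨fun ⟨hI, hpI⟩ => (merge_indep_iff_of_notMem hpI).1 hI, fun hI => ?_⟩
    have hpI : p ∉ I := fun h => hp (hI.1.subset_ground h)
    exact ⟨(merge_indep_iff_of_notMem hpI).2 hI, hpI⟩

lemma merge_isCircuit_iff_of_notMem (hp : p ∉ Q.E) (hpC : p ∉ C) :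
    (Q.merge hQ a b p).IsCircuit C ↔ Q.IsCircuit C ∧ Disjoint C {a, b} := by
  rw [← delete_isCircuit_iff, ← merge_delete_eq hp, delete_isCircuit_iff,
    disjoint_singleton_right, and_iff_left hpC]

lemma IsCircuit.exists_of_merge (hC : (Q.merge hQ a b p).IsCircuit C) (hpC : p ∈ C)
    (ha : a ∈ Q.E) (hb : b ∈ Q.E) : ∃ Ca Cb, Q.IsCircuit Ca ∧ a ∈ Ca ∧ Q.IsCircuit Cb ∧ b ∈ Cb ∧
      C = insert p ((Ca \ {a}) ∪ (Cb \ {b})) := by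
  set X := C \ {p}
  have hpX : p ∉ X := fun h => h.2 rfl
  have hCX : C = insert p X := (insert_sdiff_self_of_mem hpC).symm
  obtain ⟨hX, hXab⟩ := (merge_indep_iff_of_notMem hpX).1 (hC.sdiff_singleton_indep hpC)
  have hdep := hC.not_indep
  rw [hCX, merge_indep_insert_iff hpX, not_and, not_or] at hdep
  obtain ⟨hdepa, hdepb⟩ := hdep hXab
  obtain ⟨Ca, hCaX, hCa, haCa⟩ := hX.exists_isCircuit_of_not_indep_insert ha hdepa
  obtain ⟨Cb, hCbX, hCb, hbCb⟩ := hX.exists_isCircuit_of_not_indep_insert hb hdepb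
  have hDX : (Ca \ {a}) ∪ (Cb \ {b}) ⊆ X :=
    union_subset (sdiff_singleton_subset_iff.2 hCaX) (sdiff_singleton_subset_iff.2 hCbX)
  refine ⟨Ca, Cb, hCa, haCa, hCb, hbCb, (hC.eq_of_not_indep_subset ?_ ?_).symm⟩
  · rw [merge_indep_insert_iff fun h => hpX (hDX h)]
    rintro ⟨-, hD | hD⟩
    · exact hCa.not_indep <| hD.subset <| (subset_insert_sdiff_singleton a Ca).trans <|
        insert_subset_insert subset_union_left
    · exact hCb.not_indep <| hD.subset <| (subset_insert_sdiff_singleton b Cb).trans <|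
        insert_subset_insert subset_union_right
  · exact hCX ▸ insert_subset_insert hDX

end Merge

section Series

variable {α : Type*} [DecidableEq α] {M₁ M₂ : Matroid α} {h : Disjoint M₁.E M₂.E}
  {h₁ : M₁.E.Finite} {h₂ : M₂.E.Finite} {p₁ p₂ p : α} {C C₁ C₂ : Set α}

def seriesConnection (M₁ M₂ : Matroid α) (h : Disjoint M₁.E M₂.E) (h₁ : M₁.E.Finite)
    (h₂ : M₂.E.Finite) (p₁ p₂ p : α) : Matroid α :=
  (M₁.disjointSum M₂ h).merge (by simpa using h₁.union h₂) p₁ p₂ p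

lemma seriesConnection_ground (hp₁ : p₁ ∈ M₁.E) (hp₂ : p₂ ∈ M₂.E) :
    (M₁.seriesConnection M₂ h h₁ h₂ p₁ p₂ p).E = (M₁.E \ {p₁}) ∪ (M₂.E \ {p₂}) ∪ {p} := by
  have hp₁₂ := h.notMem_of_mem_left hp₁
  have hp₂₁ := h.notMem_of_mem_right hp₂
  ext x
  simp only [seriesConnection, merge_ground, disjointSum_ground_eq, mem_insert_iff, mem_sdiff,
    mem_union, mem_singleton_iff]
  grind

lemma seriesConnection_isCircuit_iff_of_notMem (hp : p ∉ M₁.E ∪ M₂.E) (hp₁ : p₁ ∈ M₁.E)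
    (hp₂ : p₂ ∈ M₂.E) (hpC : p ∉ C) :
    (M₁.seriesConnection M₂ h h₁ h₂ p₁ p₂ p).IsCircuit C ↔
      (M₁.IsCircuit C ∧ p₁ ∉ C) ∨ (M₂.IsCircuit C ∧ p₂ ∉ C) := by
  have hp₂C : M₁.IsCircuit C → p₂ ∉ C := fun hC hp₂C =>
    h.notMem_of_mem_right hp₂ (hC.subset_ground hp₂C)
  have hp₁C : M₂.IsCircuit C → p₁ ∉ C := fun hC hp₁C =>
    h.notMem_of_mem_left hp₁ (hC.subset_ground hp₁C)
  rw [seriesConnection, merge_isCircuit_iff_of_notMem (by simpa using hp) hpC,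
    disjointSum_isCircuit_iff, disjoint_insert_right, disjoint_singleton_right]
  tauto

lemma seriesConnection_isCircuit_insert (hp : p ∉ M₁.E ∪ M₂.E) (hC₁ : M₁.IsCircuit C₁)
    (hp₁ : p₁ ∈ C₁) (hC₂ : M₂.IsCircuit C₂) (hp₂ : p₂ ∈ C₂) :
    (M₁.seriesConnection M₂ h h₁ h₂ p₁ p₂ p).IsCircuit (insert p ((C₁ \ {p₁}) ∪ (C₂ \ {p₂}))) := by
  set X₁ := C₁ \ {p₁}
  set X₂ := C₂ \ {p₂}
  have hX₁ : X₁ ⊆ M₁.E := sdiff_subset.trans hC₁.subset_ground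
  have hX₂ : X₂ ⊆ M₂.E := sdiff_subset.trans hC₂.subset_ground
  have hpX : p ∉ X₁ ∪ X₂ := fun hpX => hp (union_subset_union hX₁ hX₂ hpX)
  have hp₁X₂ : p₁ ∉ X₂ := fun h' => h.notMem_of_mem_left (hC₁.subset_ground hp₁) (hX₂ h')
  have hp₂X₁ : p₂ ∉ X₁ := fun h' => h.notMem_of_mem_right (hC₂.subset_ground hp₂) (hX₁ h')
  have hab : Disjoint (X₁ ∪ X₂) {p₁, p₂} := by
    simp [disjoint_insert_right, X₁, X₂, hp₁X₂, hp₂X₁]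
  have hins₁ : insert p₁ (X₁ ∪ X₂) = C₁ ∪ X₂ := by rw [← insert_union, insert_sdiff_self_of_mem hp₁]
  have hins₂ : insert p₂ (X₁ ∪ X₂) = X₁ ∪ C₂ := by rw [← union_insert, insert_sdiff_self_of_mem hp₂]
  rw [isCircuit_iff_forall_ssubset, dep_iff, seriesConnection, merge_indep_insert_iff hpX, hins₁,
    hins₂, disjointSum_indep_union_iff hC₁.subset_ground hX₂,
    disjointSum_indep_union_iff hX₁ hC₂.subset_ground]
  refine ⟨⟨fun ⟨_, hC⟩ => hC.elim (hC₁.not_indep ·.1) (hC₂.not_indep ·.2), ?_⟩, fun D hD => ?_⟩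
  · exact insert_subset_insert
      (subset_sdiff.2 ⟨disjointSum_ground_eq ▸ union_subset_union hX₁ hX₂, hab⟩)
  obtain ⟨x, hxC, hxD⟩ := exists_of_ssubset hD
  by_cases hpD : p ∈ D
  · have hDX : D \ {p} ⊆ X₁ ∪ X₂ := sdiff_singleton_subset_iff.2 hD.subset
    rw [← insert_sdiff_self_of_mem hpD, merge_indep_insert_iff fun h' => h'.2 rfl]
    refine ⟨hab.mono_left hDX, ?_⟩
    rcases hxC with rfl | hx₁ | hx₂
    · exact absurd hpD hxD
    · refine .inl <| hC₁.disjointSum_indep_of_subset (hC₂.sdiff_singleton_indep hp₂) hx₁.1 <|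
        subset_sdiff_singleton (hins₁ ▸ insert_subset_insert hDX) ?_
      rintro (hx | hx)
      exacts [hx₁.2 hx, hxD hx.1]
    · rw [disjointSum_comm]
      refine .inr <| hC₂.disjointSum_indep_of_subset (hC₁.sdiff_singleton_indep hp₁) hx₂.1 <|
        subset_sdiff_singleton (hins₂.trans (union_comm _ _) ▸ insert_subset_insert hDX) ?_
      rintro (hx | hx)
      exacts [hx₂.2 hx, hxD hx.1]
  · have hDX : D ⊆ X₁ ∪ X₂ := (subset_insert_iff_of_notMem hpD).1 hD.subset
    refine (merge_indep_iff_of_notMem hpD).2 ⟨?_, hab.mono_left hDX⟩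
    exact ((disjointSum_indep_union_iff hX₁ hX₂).2
      ⟨hC₁.sdiff_singleton_indep hp₁, hC₂.sdiff_singleton_indep hp₂⟩).subset hDX

lemma seriesConnection_isCircuit_iff_of_mem (hp : p ∉ M₁.E ∪ M₂.E) (hp₁ : p₁ ∈ M₁.E)
    (hp₂ : p₂ ∈ M₂.E) (hpC : p ∈ C) :
    (M₁.seriesConnection M₂ h h₁ h₂ p₁ p₂ p).IsCircuit C ↔
      ∃ C₁ C₂, M₁.IsCircuit C₁ ∧ p₁ ∈ C₁ ∧ M₂.IsCircuit C₂ ∧ p₂ ∈ C₂ ∧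
        C = insert p ((C₁ \ {p₁}) ∪ (C₂ \ {p₂})) := by
  refine ⟨fun hC => ?_, ?_⟩
  · obtain ⟨C₁, C₂, hC₁, hp₁C₁, hC₂, hp₂C₂, rfl⟩ :=
      hC.exists_of_merge hpC (by simp [hp₁]) (by simp [hp₂])
    refine ⟨C₁, C₂, ?_, hp₁C₁, ?_, hp₂C₂, rfl⟩
    · exact (disjointSum_isCircuit_iff.1 hC₁).resolve_right fun hC₁ =>
        h.notMem_of_mem_left hp₁ (hC₁.subset_ground hp₁C₁)
    · exact (disjointSum_isCircuit_iff.1 hC₂).resolve_left fun hC₂ =>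
        h.notMem_of_mem_right hp₂ (hC₂.subset_ground hp₂C₂)
  · rintro ⟨C₁, C₂, hC₁, hp₁C₁, hC₂, hp₂C₂, rfl⟩
    exact seriesConnection_isCircuit_insert hp hC₁ hp₁C₁ hC₂ hp₂C₂

lemma seriesConnection_isCircuit_iff (hp : p ∉ M₁.E ∪ M₂.E) (hp₁ : p₁ ∈ M₁.E)
    (hp₂ : p₂ ∈ M₂.E) :
    (M₁.seriesConnection M₂ h h₁ h₂ p₁ p₂ p).IsCircuit C ↔
      (M₁.IsCircuit C ∧ p₁ ∉ C) ∨ (M₂.IsCircuit C ∧ p₂ ∉ C) ∨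
        ∃ C₁ C₂, M₁.IsCircuit C₁ ∧ p₁ ∈ C₁ ∧ M₂.IsCircuit C₂ ∧ p₂ ∈ C₂ ∧
          C = (C₁ \ {p₁}) ∪ (C₂ \ {p₂}) ∪ {p} := by
  simp only [union_singleton]
  by_cases hpC : p ∈ C
  · have hC₁ : ¬ M₁.IsCircuit C := fun hC => hp (.inl (hC.subset_ground hpC))
    have hC₂ : ¬ M₂.IsCircuit C := fun hC => hp (.inr (hC.subset_ground hpC))
    simp only [seriesConnection_isCircuit_iff_of_mem hp hp₁ hp₂ hpC, hC₁, hC₂, false_and,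
      false_or]
  · have hC : ¬ ∃ C₁ C₂, M₁.IsCircuit C₁ ∧ p₁ ∈ C₁ ∧ M₂.IsCircuit C₂ ∧ p₂ ∈ C₂ ∧
        C = insert p ((C₁ \ {p₁}) ∪ (C₂ \ {p₂})) := by
      rintro ⟨_, _, -, -, -, -, hCeq⟩
      exact hpC (hCeq ▸ mem_insert _ _)
    rw [seriesConnection_isCircuit_iff_of_notMem hp hp₁ hp₂ hpC, ← or_assoc, or_iff_left hC]

end Series

end Matroid

theorem seriesConnection_exists_general {α : Type*} (M1 M2 : Matroid α)
    (h1 : M1.E.Finite) (h2 : M2.E.Finite) (hdisj : Disjoint M1.E M2.E)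
    (p1 p2 p : α) (hp1 : p1 ∈ M1.E) (hp2 : p2 ∈ M2.E)
    (hp : p ∉ M1.E ∪ M2.E) :
    ∃ N : Matroid α, N.E = (M1.E \ {p1}) ∪ (M2.E \ {p2}) ∪ {p} ∧
      ∀ C : Set α, N.Circuit' C ↔
        ((M1.Circuit' C ∧ p1 ∉ C) ∨ (M2.Circuit' C ∧ p2 ∉ C) ∨
          ∃ C1 C2 : Set α, M1.Circuit' C1 ∧ p1 ∈ C1 ∧ M2.Circuit' C2 ∧ p2 ∈ C2 ∧
            C = (C1 \ {p1}) ∪ (C2 \ {p2}) ∪ {p}) := by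
  classical
  refine ⟨M1.seriesConnection M2 hdisj h1 h2 p1 p2 p, Matroid.seriesConnection_ground hp1 hp2,
    fun C => ?_⟩
  simp only [Matroid.circuit'_iff_isCircuit]
  exact Matroid.seriesConnection_isCircuit_iff hp hp1 hp2

/-- The series connection: given matroids `M1`, `M2` on disjoint finite ground sets,
non-loop elements `p1 ∈ M1.E`, `p2 ∈ M2.E`, and a fresh element `p`, there is a matroid
on `(M1.E \ {p1}) ∪ (M2.E \ {p2}) ∪ {p}` whose circuits are exactly: the circuits of `M1`
avoiding `p1`, the circuits of `M2` avoiding `p2`, and the sets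
`(C1 \ {p1}) ∪ (C2 \ {p2}) ∪ {p}` for circuits `Ci` of `Mi` containing `pi`. -/
theorem seriesConnection_exists {α : Type*} (M1 M2 : Matroid α)
    (h1 : M1.E.Finite) (h2 : M2.E.Finite) (hdisj : Disjoint M1.E M2.E)
    (p1 p2 p : α) (hp1 : p1 ∈ M1.E) (hp2 : p2 ∈ M2.E)
    (hl1 : M1.Indep {p1}) (hl2 : M2.Indep {p2})
    (hp : p ∉ M1.E ∪ M2.E) :
    ∃ N : Matroid α, N.E = (M1.E \ {p1}) ∪ (M2.E \ {p2}) ∪ {p} ∧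
      ∀ C : Set α, N.Circuit' C ↔
        ((M1.Circuit' C ∧ p1 ∉ C) ∨ (M2.Circuit' C ∧ p2 ∉ C) ∨
          ∃ C1 C2 : Set α, M1.Circuit' C1 ∧ p1 ∈ C1 ∧ M2.Circuit' C2 ∧ p2 ∈ C2 ∧
            C = (C1 \ {p1}) ∪ (C2 \ {p2}) ∪ {p}) :=
  seriesConnection_exists_general M1 M2 h1 h2 hdisj p1 p2 p hp1 hp2 hp
end

section
/- Let E be a finite set and 𝒟 a collection of subsets of E such that: (i) ∅ ∉ 𝒟; (ii) if D ∈ 𝒟 and D ⊆ D' ⊆ E then D' ∈ 𝒟; (iii) if D1, D2 ∈ 𝒟 are distinct and e ∈ D1 ∩ D2, then (D1 ∪ D2) \ {e} ∈ 𝒟. Then there exists a matroid on E whose dependent sets are exactly the members of 𝒟. -/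
/-!
Take the independent sets to be the subsets of `E` outside `𝒟`; only augmentation needs work.
If `I, J ∉ 𝒟` with `|I| < |J|` but `insert e I ∈ 𝒟` for every `e ∈ J \ I`, then repeated
elimination shows that `(I \ T) ∪ S ∈ 𝒟` whenever `T ⊆ I`, `S ⊆ J \ I` and `|S| = |T| + 1`:
given `a ≠ b` in `S` and `t ∈ T`, eliminate `t` from the two sets obtained for `S \ {a}` and
`S \ {b}` with `T \ {t}`. Taking `T = I \ J` yields a member of `𝒟` inside `J`, so `J ∈ 𝒟`.
-/

open Set

section Elimination

variable {α : Type*} {𝒟 : Set (Set α)}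

lemma diff_union_mem_of_forall_insert_mem
    (helim : ∀ D1 ∈ 𝒟, ∀ D2 ∈ 𝒟, D1 ≠ D2 → ∀ e ∈ D1 ∩ D2, (D1 ∪ D2) \ {e} ∈ 𝒟)
    {I T : Set α} (hT : T.Finite) (hTI : T ⊆ I) :
    ∀ S : Set α, Disjoint S I → (∀ x ∈ S, insert x I ∈ 𝒟) → S.ncard = T.ncard + 1 →
      (I \ T) ∪ S ∈ 𝒟 := by
  induction T, hT using Set.Finite.induction_on with
  | empty =>
    intro S _ hins hS
    obtain ⟨e, rfl⟩ := ncard_eq_one.mp (by simpa using hS)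
    simpa using hins e rfl
  | @insert t T htT hT ih =>
    intro S hSI hins hS
    have htI : t ∈ I := hTI (mem_insert t T)
    have hTI' : T ⊆ I := (subset_insert t T).trans hTI
    rw [ncard_insert_of_notMem htT hT] at hS
    obtain ⟨a, haS, b, hbS, hab⟩ :=
      (one_lt_ncard (s := S) (finite_of_ncard_pos (by omega))).mp (by omega)
    have hcard : ∀ x ∈ S, (S \ {x}).ncard = T.ncard + 1 := fun x hx => by
      rw [ncard_sdiff_singleton_of_mem hx]; omega
    have hmem : ∀ x ∈ S, (I \ T) ∪ (S \ {x}) ∈ 𝒟 := fun x hx =>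
      ih hTI' _ (hSI.mono_left sdiff_subset) (fun y hy => hins y hy.1) (hcard x hx)
    have hne : (I \ T) ∪ (S \ {a}) ≠ (I \ T) ∪ (S \ {b}) := by
      intro h
      have hb : b ∈ (I \ T) ∪ (S \ {a}) := Or.inr ⟨hbS, Ne.symm hab⟩
      rw [h] at hb
      rcases hb with hb | hb
      · exact hSI.notMem_of_mem_left hbS hb.1
      · exact hb.2 rfl
    have htD : ∀ x, t ∈ (I \ T) ∪ (S \ {x}) := fun _ => Or.inl ⟨htI, htT⟩
    have htS : t ∉ S := fun h => hSI.notMem_of_mem_left h htI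
    convert helim _ (hmem a haS) _ (hmem b hbS) hne t ⟨htD a, htD b⟩ using 1
    -- `(S \ {a}) ∪ (S \ {b}) = S` as `a ≠ b`, and removing `t` does not touch `S`
    ext x
    simp only [mem_union, mem_sdiff, mem_insert_iff, mem_singleton_iff]
    grind

lemma exists_insert_notMem_of_ncard_lt {E I J : Set α}
    (hsup : ∀ D ∈ 𝒟, ∀ D' : Set α, D ⊆ D' → D' ⊆ E → D' ∈ 𝒟)
    (helim : ∀ D1 ∈ 𝒟, ∀ D2 ∈ 𝒟, D1 ≠ D2 → ∀ e ∈ D1 ∩ D2, (D1 ∪ D2) \ {e} ∈ 𝒟)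
    (hE : E.Finite) (hIE : I ⊆ E) (hJE : J ⊆ E) (hJ : J ∉ 𝒟)
    (hIJ : I.ncard < J.ncard) : ∃ e ∈ J, e ∉ I ∧ insert e I ∉ 𝒟 := by
  by_contra! hins
  have hI : I.Finite := hE.subset hIE
  have hlt : (I \ J).ncard < (J \ I).ncard :=
    (ncard_lt_ncard_iff_ncard_sdiff_lt_ncard_sdiff hI (hE.subset hJE)).mp hIJ
  obtain ⟨S, hSJ, hS⟩ := exists_subset_card_eq (s := J \ I) (n := (I \ J).ncard + 1) hlt
  have hD : (I \ (I \ J)) ∪ S ∈ 𝒟 :=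
    diff_union_mem_of_forall_insert_mem helim (hI.subset sdiff_subset) sdiff_subset S
      (disjoint_sdiff_left.mono_left hSJ) (fun x hx => hins x (hSJ hx).1 (hSJ hx).2) hS
  refine hJ (hsup _ hD J ?_ hJE)
  rw [sdiff_sdiff_right_self]
  exact union_subset inter_subset_right (hSJ.trans sdiff_subset)

end Elimination

theorem matroid_of_dependent_sets_general {α : Type*} (E : Set α) (hE : E.Finite)
    (𝒟 : Set (Set α))
    (h0 : ∅ ∉ 𝒟)
    (hsup : ∀ D ∈ 𝒟, ∀ D' : Set α, D ⊆ D' → D' ⊆ E → D' ∈ 𝒟)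
    (helim : ∀ D1 ∈ 𝒟, ∀ D2 ∈ 𝒟, D1 ≠ D2 → ∀ e ∈ D1 ∩ D2, (D1 ∪ D2) \ {e} ∈ 𝒟) :
    ∃ N : Matroid α, N.E = E ∧ ∀ D : Set α, D ⊆ E → (N.Dep D ↔ D ∈ 𝒟) := by
  let M : IndepMatroid α := IndepMatroid.ofFinite hE (fun I => I ⊆ E ∧ I ∉ 𝒟)
    (indep_empty := ⟨empty_subset E, h0⟩)
    (indep_subset := fun I J ⟨hJE, hJ⟩ hIJ =>
      ⟨hIJ.trans hJE, fun hI => hJ (hsup I hI J hIJ hJE)⟩)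
    (indep_aug := fun I J ⟨hIE, _⟩ ⟨hJE, hJ⟩ hIJ => by
      obtain ⟨e, heJ, heI, he⟩ := exists_insert_notMem_of_ncard_lt hsup helim hE hIE hJE hJ hIJ
      exact ⟨e, heJ, heI, insert_subset (hJE heJ) hIE, he⟩)
    (subset_ground := fun _ hI => hI.1)
  refine ⟨M.matroid, rfl, fun D hDE => ?_⟩
  simp [Matroid.dep_iff, M, hDE]

/-- Let `E` be a finite set and `𝒟` a collection of subsets of `E` such that:
(i) `∅ ∉ 𝒟`; (ii) `𝒟` is closed under supersets within `E`; (iii) the strengthened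
elimination axiom holds: for distinct `D1, D2 ∈ 𝒟` and `e ∈ D1 ∩ D2`,
`(D1 ∪ D2) \ {e} ∈ 𝒟`. Then there is a matroid on `E` whose dependent sets are
exactly the members of `𝒟`. -/
theorem matroid_of_dependent_sets {α : Type*} (E : Set α) (hE : E.Finite)
    (𝒟 : Set (Set α)) (hsub : ∀ D ∈ 𝒟, D ⊆ E)
    (h0 : ∅ ∉ 𝒟)
    (hsup : ∀ D ∈ 𝒟, ∀ D' : Set α, D ⊆ D' → D' ⊆ E → D' ∈ 𝒟)
    (helim : ∀ D1 ∈ 𝒟, ∀ D2 ∈ 𝒟, D1 ≠ D2 → ∀ e ∈ D1 ∩ D2, (D1 ∪ D2) \ {e} ∈ 𝒟) :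
    ∃ N : Matroid α, N.E = E ∧ ∀ D : Set α, D ⊆ E → (N.Dep D ↔ D ∈ 𝒟) :=
  matroid_of_dependent_sets_general E hE 𝒟 h0 hsup helim
end

section
/- Let E be a set and 𝒟 a collection of subsets of E that is closed under taking supersets within E (if D ∈ 𝒟 and D ⊆ D' ⊆ E then D' ∈ 𝒟). Define inductively 𝒟₀ = 𝒟 and 𝒟_{n+1} = 𝒟_n ∪ { (D1 ∪ D2) \ {e} : D1, D2 ∈ 𝒟_n, e ∈ D1 ∩ D2 }. Then every 𝒟_n, and hence the union ⋃_n 𝒟_n (the closure of 𝒟 under the elimination operation), is closed under taking supersets within E. -/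
/-!
A set `D'` with `(D1 ∪ D2) \ {e} ⊆ D' ⊆ E` satisfies `D1 ⊆ insert e D' ⊆ E`. If `e ∈ D'`, then
`D'` is itself a superset of `D1`; otherwise `D'` arises by eliminating `e` from two copies of the
superset `insert e D'` of `D1`. Hence one elimination step preserves upward closure within `E`.
-/

/-- One step of the elimination operation on a set family: add all sets
`(D1 ∪ D2) \ {e}` for `D1, D2` in the family and `e ∈ D1 ∩ D2`. -/
def elimStep {α : Type*} (𝒟 : Set (Set α)) : Set (Set α) :=
  𝒟 ∪ {D | ∃ D1 ∈ 𝒟, ∃ D2 ∈ 𝒟, ∃ e ∈ D1 ∩ D2, D = (D1 ∪ D2) \ {e}}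

/-- Iteration of the elimination operation: `elimIter 𝒟 0 = 𝒟` and
`elimIter 𝒟 (n+1) = elimStep (elimIter 𝒟 n)`. -/
def elimIter {α : Type*} (𝒟 : Set (Set α)) : ℕ → Set (Set α)
  | 0 => 𝒟
  | n + 1 => elimStep (elimIter 𝒟 n)

def UpperClosedIn {α : Type*} (E : Set α) (𝒟 : Set (Set α)) : Prop :=
  ∀ D ∈ 𝒟, ∀ D' : Set α, D ⊆ D' → D' ⊆ E → D' ∈ 𝒟

theorem UpperClosedIn.iUnion {α ι : Type*} {E : Set α} {𝒟 : ι → Set (Set α)}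
    (h : ∀ i, UpperClosedIn E (𝒟 i)) : UpperClosedIn E (⋃ i, 𝒟 i) := by
  intro D hD D' hDD' hD'E
  obtain ⟨i, hi⟩ := Set.mem_iUnion.mp hD
  exact Set.mem_iUnion.mpr ⟨i, h i D hi D' hDD' hD'E⟩

section Elimination

variable {α : Type*} {E : Set α} {𝒟 : Set (Set α)}

theorem subset_elimStep (𝒟 : Set (Set α)) : 𝒟 ⊆ elimStep 𝒟 :=
  Set.subset_union_left

theorem mem_elimStep_of_insert_mem {D : Set α} {e : α} (he : e ∉ D) (hD : insert e D ∈ 𝒟) :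
    D ∈ elimStep 𝒟 := by
  refine Or.inr ⟨_, hD, _, hD, e, ⟨Set.mem_insert e D, Set.mem_insert e D⟩, ?_⟩
  rw [Set.union_self, Set.insert_sdiff_self_of_notMem he]

theorem elimStep_subset (hsub : ∀ D ∈ 𝒟, D ⊆ E) : ∀ D ∈ elimStep 𝒟, D ⊆ E := by
  rintro D (hD | ⟨D1, hD1, D2, hD2, e, -, rfl⟩)
  · exact hsub D hD
  · exact Set.sdiff_subset.trans (Set.union_subset (hsub D1 hD1) (hsub D2 hD2))

theorem upperClosedIn_elimStep (hsub : ∀ D ∈ 𝒟, D ⊆ E) (hsup : UpperClosedIn E 𝒟) :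
    UpperClosedIn E (elimStep 𝒟) := by
  rintro D (hD | ⟨D1, hD1, D2, hD2, e, he, rfl⟩) D' hDD' hD'E
  · exact subset_elimStep 𝒟 (hsup D hD D' hDD' hD'E)
  have hD1ins : D1 ⊆ insert e D' :=
    Set.subset_union_left.trans (Set.sdiff_subset_iff.mp hDD')
  by_cases heD' : e ∈ D'
  · rw [Set.insert_eq_of_mem heD'] at hD1ins
    exact subset_elimStep 𝒟 (hsup D1 hD1 D' hD1ins hD'E)
  · have hinsE : insert e D' ⊆ E := Set.insert_subset (hsub D1 hD1 he.1) hD'E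
    exact mem_elimStep_of_insert_mem heD' (hsup D1 hD1 _ hD1ins hinsE)

theorem elimIter_subset (hsub : ∀ D ∈ 𝒟, D ⊆ E) : ∀ n, ∀ D ∈ elimIter 𝒟 n, D ⊆ E
  | 0 => hsub
  | n + 1 => elimStep_subset (elimIter_subset hsub n)

theorem upperClosedIn_elimIter (hsub : ∀ D ∈ 𝒟, D ⊆ E) (hsup : UpperClosedIn E 𝒟) :
    ∀ n, UpperClosedIn E (elimIter 𝒟 n)
  | 0 => hsup
  | n + 1 => upperClosedIn_elimStep (elimIter_subset hsub n) (upperClosedIn_elimIter hsub hsup n)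

end Elimination

/-- If `𝒟` is a collection of subsets of `E` closed under taking supersets within `E`,
then every stage `elimIter 𝒟 n` of the closure under the elimination operation, and hence
the union `⋃ n, elimIter 𝒟 n`, is closed under taking supersets within `E`. -/
theorem elimIter_superset_closed {α : Type*} (E : Set α) (𝒟 : Set (Set α))
    (hsub : ∀ D ∈ 𝒟, D ⊆ E)
    (hsup : ∀ D ∈ 𝒟, ∀ D' : Set α, D ⊆ D' → D' ⊆ E → D' ∈ 𝒟) :
    (∀ n : ℕ, ∀ D ∈ elimIter 𝒟 n, ∀ D' : Set α, D ⊆ D' → D' ⊆ E → D' ∈ elimIter 𝒟 n) ∧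
      (∀ D ∈ ⋃ n : ℕ, elimIter 𝒟 n, ∀ D' : Set α, D ⊆ D' → D' ⊆ E →
        D' ∈ ⋃ n : ℕ, elimIter 𝒟 n) := by
  have hstages : ∀ n, UpperClosedIn E (elimIter 𝒟 n) := upperClosedIn_elimIter hsub hsup
  exact ⟨hstages, UpperClosedIn.iUnion hstages⟩
end

section
/- Let F be a field, V1 and V2 vector spaces over F, and p1 ∈ V1, p2 ∈ V2 nonzero vectors. Let W = (V1 × V2) / span_F{(p1, −p2)} with quotient map π, and define ι1 : V1 → W by ι1(x) = π(x, 0) and ι2 : V2 → W by ι2(y) = π(0, y). Let x : A → V1 and y : B → V2 be families of vectors. Then the combined family z : A ⊕ B → W given by z = ι1 ∘ x on A and z = ι2 ∘ y on B is linearly dependent over F if and only if x is linearly dependent, or y is linearly dependent, or (p1 ∈ span(range x) and p2 ∈ span(range y)). -/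
/-!
In `W = (V₁ × V₂) ⧸ K ∙ (p₁, -p₂)` one has `ι₁ u = ι₂ v` iff `(u, v) = t • (p₁, p₂)` for some
scalar `t`. Hence `ι₁` and `ι₂` are injective (as `p₂, p₁ ≠ 0`), and a nonzero common vector of
`ι₁ (span x)` and `ι₂ (span y)` is `ι₁ (t • p₁) = ι₂ (t • p₂)` with `t ≠ 0`, so the images of two
subspaces meet iff they contain `p₁` and `p₂` respectively. A family indexed by `A ⊕ B` is
independent iff both halves are and their spans are disjoint, which gives the claim.
-/

namespace ParallelConnection

variable (K : Type*) {V₁ V₂ : Type*} [DivisionRing K] [AddCommGroup V₁] [Module K V₁]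
  [AddCommGroup V₂] [Module K V₂] (p₁ : V₁) (p₂ : V₂)

/-- The pushout of `K ∙ p₁ → V₁` and `K ∙ p₂ → V₂` along `p₁ ↦ p₂`. -/
abbrev Pushout : Type _ := (V₁ × V₂) ⧸ (K ∙ ((p₁, -p₂) : V₁ × V₂))

def inl : V₁ →ₗ[K] Pushout K p₁ p₂ := (K ∙ ((p₁, -p₂) : V₁ × V₂)).mkQ ∘ₗ LinearMap.inl K V₁ V₂

def inr : V₂ →ₗ[K] Pushout K p₁ p₂ := (K ∙ ((p₁, -p₂) : V₁ × V₂)).mkQ ∘ₗ LinearMap.inr K V₁ V₂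

variable {K p₁ p₂}

theorem inl_eq_inr_iff {u : V₁} {v : V₂} :
    inl K p₁ p₂ u = inr K p₁ p₂ v ↔ ∃ t : K, t • p₁ = u ∧ t • p₂ = v := by
  simp [inl, inr, Submodule.Quotient.eq, Submodule.mem_span_singleton, Prod.ext_iff]

theorem inl_self : inl K p₁ p₂ p₁ = inr K p₁ p₂ p₂ :=
  inl_eq_inr_iff.mpr ⟨1, one_smul K p₁, one_smul K p₂⟩

theorem injective_inl (hp₂ : p₂ ≠ 0) : Function.Injective (inl K p₁ p₂) := by
  refine (injective_iff_map_eq_zero _).mpr fun u hu => ?_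
  obtain ⟨t, rfl, ht⟩ := inl_eq_inr_iff.mp (hu.trans (map_zero (inr K p₁ p₂)).symm)
  rw [(smul_eq_zero.mp ht).resolve_right hp₂, zero_smul]

theorem injective_inr (hp₁ : p₁ ≠ 0) : Function.Injective (inr K p₁ p₂) := by
  refine (injective_iff_map_eq_zero _).mpr fun v hv => ?_
  obtain ⟨t, ht, rfl⟩ := inl_eq_inr_iff.mp ((map_zero (inl K p₁ p₂)).trans hv.symm)
  rw [(smul_eq_zero.mp ht).resolve_right hp₁, zero_smul]

theorem not_disjoint_map_inl_map_inr_iff (hp₁ : p₁ ≠ 0) (hp₂ : p₂ ≠ 0)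
    (P : Submodule K V₁) (Q : Submodule K V₂) :
    ¬ Disjoint (P.map (inl K p₁ p₂)) (Q.map (inr K p₁ p₂)) ↔ p₁ ∈ P ∧ p₂ ∈ Q := by
  rw [Submodule.disjoint_def]
  push Not
  constructor
  · rintro ⟨_, ⟨u, hu, rfl⟩, ⟨v, hv, huv⟩, hne⟩
    obtain ⟨t, rfl, rfl⟩ := inl_eq_inr_iff.mp huv.symm
    have ht : t ≠ 0 := by
      rintro rfl
      exact hne (by rw [zero_smul, map_zero])
    exact ⟨(P.smul_mem_iff ht).mp hu, (Q.smul_mem_iff ht).mp hv⟩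
  · rintro ⟨hP, hQ⟩
    refine ⟨inl K p₁ p₂ p₁, ⟨p₁, hP, rfl⟩, ⟨p₂, hQ, inl_self.symm⟩, ?_⟩
    exact (map_ne_zero_iff _ (injective_inl hp₂)).mpr hp₁

end ParallelConnection

open ParallelConnection in
/-- Parallel connection via pushout of representations (boundary of size one): for
nonzero `p1 ∈ V1`, `p2 ∈ V2`, let `W = (V1 × V2) / span {(p1, -p2)}`. The combined
family of the images of `x : A → V1` and `y : B → V2` in `W` is linearly dependent
iff `x` is linearly dependent, or `y` is linearly dependent, or
(`p1 ∈ span (range x)` and `p2 ∈ span (range y)`). -/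
theorem pushout_dependent_iff_parallelConnection {F V1 V2 : Type*} [Field F]
    [AddCommGroup V1] [Module F V1] [AddCommGroup V2] [Module F V2] {A B : Type*}
    (p1 : V1) (p2 : V2) (hp1 : p1 ≠ 0) (hp2 : p2 ≠ 0)
    (x : A → V1) (y : B → V2) :
    ¬ LinearIndependent F (Sum.elim
        (fun a : A => Submodule.Quotient.mk
          (p := Submodule.span F {((p1, -p2) : V1 × V2)}) (x a, (0 : V2)))
        (fun b : B => Submodule.Quotient.mk
          (p := Submodule.span F {((p1, -p2) : V1 × V2)}) ((0 : V1), y b))) ↔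
      ¬ LinearIndependent F x ∨ ¬ LinearIndependent F y ∨
        (p1 ∈ Submodule.span F (Set.range x) ∧ p2 ∈ Submodule.span F (Set.range y)) := by
  change ¬ LinearIndependent F (Sum.elim (inl F p1 p2 ∘ x) (inr F p1 p2 ∘ y)) ↔ _
  rw [linearIndependent_sum, Sum.elim_comp_inl, Sum.elim_comp_inr,
    (inl F p1 p2).linearIndependent_iff_of_injOn (injective_inl hp2).injOn,
    (inr F p1 p2).linearIndependent_iff_of_injOn (injective_inr hp1).injOn,
    Set.range_comp, Set.range_comp, Submodule.span_image, Submodule.span_image,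
    ← not_disjoint_map_inl_map_inr_iff hp1 hp2]
  tauto
end

section
/- Let V1 and V2 be vector spaces over the two-element field F2 = ZMod 2, let t ∈ ℕ, and let γ1 : Fin t → V1 and γ2 : Fin t → V2. Let W = (V1 × V2) / span{(γ1 j, γ2 j) : j ∈ Fin t} with quotient map π, and define ι1(x) = π(x, 0), ι2(y) = π(0, y). Let x : A → V1 and y : B → V2 be families of vectors indexed by finite sets A and B. Then the combined family of images ι1 ∘ x on A and ι2 ∘ y on B is linearly dependent over F2 if and only if there exist subsets S ⊆ A, T ⊆ B and J ⊆ Fin t with S ∪ T nonempty such that Σ_{a ∈ S} x a = Σ_{j ∈ J} γ1 j and Σ_{b ∈ T} y b = Σ_{j ∈ J} γ2 j. -/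
/-! Over `ZMod 2` a linear dependency is just a nonempty finite subset with zero sum, and a
vector lies in the span of a family iff it is the sum of the family over some finite subset.
A finite subset of `A ⊕ B` splits into `S ⊆ A` and `T ⊆ B`, and the corresponding images sum
to `π (∑ a ∈ S, x a, ∑ b ∈ T, y b)`, which vanishes iff that pair is the sum of the
generators `(γ1 j, γ2 j)` over some `J`. -/

open Finset

section ZModTwo

variable {ι M : Type*} [AddCommGroup M] [Module (ZMod 2) M]

theorem Finset.sum_zmod_two_smul_eq_sum_filter (s : Finset ι) (c : ι → ZMod 2) (v : ι → M) :
    ∑ i ∈ s, c i • v i = ∑ i ∈ s with c i ≠ 0, v i := by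
  rw [sum_filter]
  refine sum_congr rfl fun i _ => ?_
  have : c i = 0 ∨ c i = 1 := by generalize c i = z; revert z; decide
  rcases this with h | h <;> simp [h]

theorem not_linearIndependent_zmod_two_iff {v : ι → M} :
    ¬ LinearIndependent (ZMod 2) v ↔ ∃ s : Finset ι, s.Nonempty ∧ ∑ i ∈ s, v i = 0 := by
  rw [not_linearIndependent_iff]
  constructor
  · rintro ⟨s, c, hsum, i, hi, hci⟩
    rw [s.sum_zmod_two_smul_eq_sum_filter] at hsum
    exact ⟨_, ⟨i, mem_filter.2 ⟨hi, hci⟩⟩, hsum⟩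
  · rintro ⟨s, ⟨i, hi⟩, hsum⟩
    exact ⟨s, fun _ => 1, by simpa using hsum, i, hi, one_ne_zero⟩

theorem mem_span_range_zmod_two_iff [Fintype ι] {v : ι → M} {z : M} :
    z ∈ Submodule.span (ZMod 2) (Set.range v) ↔ ∃ J : Finset ι, ∑ j ∈ J, v j = z := by
  classical
  rw [Submodule.mem_span_range_iff_exists_fun]
  constructor
  · rintro ⟨c, rfl⟩
    exact ⟨_, (univ.sum_zmod_two_smul_eq_sum_filter c v).symm⟩
  · rintro ⟨J, rfl⟩
    exact ⟨fun j => if j ∈ J then 1 else 0, by simp [ite_smul]⟩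

end ZModTwo

theorem Finset.disjSum_nonempty_iff {α β : Type*} {S : Finset α} {T : Finset β} :
    (S.disjSum T).Nonempty ↔ S.Nonempty ∨ T.Nonempty := by
  simp only [nonempty_iff_ne_empty, ne_eq, disjSum_eq_empty, not_and_or]

theorem Finset.exists_nonempty_sum_sumElim_iff {α β M : Type*} [AddCommMonoid M]
    {f : α → M} {g : β → M} {P : M → Prop} :
    (∃ U : Finset (α ⊕ β), U.Nonempty ∧ P (∑ i ∈ U, Sum.elim f g i)) ↔
      ∃ (S : Finset α) (T : Finset β), (S.Nonempty ∨ T.Nonempty) ∧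
        P (∑ a ∈ S, f a + ∑ b ∈ T, g b) := by
  constructor
  · rintro ⟨U, hU, hP⟩
    refine ⟨U.toLeft, U.toRight, ?_, by rwa [← sum_sumElim, toLeft_disjSum_toRight]⟩
    rwa [← disjSum_nonempty_iff, toLeft_disjSum_toRight]
  · rintro ⟨S, T, hST, hP⟩
    exact ⟨S.disjSum T, disjSum_nonempty_iff.2 hST, by rwa [sum_sumElim]⟩

theorem pushout_dependent_iff_zmod2_general {V1 V2 : Type*}
    [AddCommGroup V1] [Module (ZMod 2) V1] [AddCommGroup V2] [Module (ZMod 2) V2]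
    {A B : Type*} {t : ℕ}
    (γ1 : Fin t → V1) (γ2 : Fin t → V2) (x : A → V1) (y : B → V2) :
    ¬ LinearIndependent (ZMod 2) (Sum.elim
        (fun a : A => Submodule.Quotient.mk
          (p := Submodule.span (ZMod 2)
            (Set.range fun j : Fin t => ((γ1 j, γ2 j) : V1 × V2))) (x a, (0 : V2)))
        (fun b : B => Submodule.Quotient.mk
          (p := Submodule.span (ZMod 2)
            (Set.range fun j : Fin t => ((γ1 j, γ2 j) : V1 × V2))) ((0 : V1), y b))) ↔
      ∃ (S : Finset A) (T : Finset B) (J : Finset (Fin t)),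
        (S.Nonempty ∨ T.Nonempty) ∧
        ∑ a ∈ S, x a = ∑ j ∈ J, γ1 j ∧ ∑ b ∈ T, y b = ∑ j ∈ J, γ2 j := by
  set p := Submodule.span (ZMod 2) (Set.range fun j : Fin t => ((γ1 j, γ2 j) : V1 × V2))
  have image_sum_eq_zero_iff (S : Finset A) (T : Finset B) :
      ∑ a ∈ S, Submodule.Quotient.mk (p := p) (x a, 0) +
          ∑ b ∈ T, Submodule.Quotient.mk (p := p) (0, y b) = 0 ↔
        ∃ J : Finset (Fin t), ∑ a ∈ S, x a = ∑ j ∈ J, γ1 j ∧ ∑ b ∈ T, y b = ∑ j ∈ J, γ2 j := by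
    simp only [← Submodule.mkQ_apply, ← map_sum, ← map_add]
    rw [Submodule.mkQ_apply, Submodule.Quotient.mk_eq_zero, mem_span_range_zmod_two_iff]
    simp only [Prod.ext_iff, Prod.fst_sum, Prod.snd_sum, Prod.fst_add, Prod.snd_add, sum_const_zero,
      add_zero, zero_add, eq_comm]
  rw [not_linearIndependent_zmod_two_iff, exists_nonempty_sum_sumElim_iff (P := (· = 0))]
  simp only [image_sum_eq_zero_iff, exists_and_left]

/-- The operation `⊕̄` over `F2`: let `W = (V1 × V2) / span {(γ1 j, γ2 j) : j}`. The
combined family of the images of `x : A → V1` and `y : B → V2` in `W` is linearly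
dependent over `F2` iff there are subsets `S ⊆ A`, `T ⊆ B`, `J ⊆ Fin t` with `S ∪ T`
nonempty such that `∑_{a ∈ S} x a = ∑_{j ∈ J} γ1 j` and `∑_{b ∈ T} y b = ∑_{j ∈ J} γ2 j`. -/
theorem pushout_dependent_iff_zmod2 {V1 V2 : Type*}
    [AddCommGroup V1] [Module (ZMod 2) V1] [AddCommGroup V2] [Module (ZMod 2) V2]
    {A B : Type*} [Fintype A] [Fintype B] {t : ℕ}
    (γ1 : Fin t → V1) (γ2 : Fin t → V2) (x : A → V1) (y : B → V2) :
    ¬ LinearIndependent (ZMod 2) (Sum.elim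
        (fun a : A => Submodule.Quotient.mk
          (p := Submodule.span (ZMod 2)
            (Set.range fun j : Fin t => ((γ1 j, γ2 j) : V1 × V2))) (x a, (0 : V2)))
        (fun b : B => Submodule.Quotient.mk
          (p := Submodule.span (ZMod 2)
            (Set.range fun j : Fin t => ((γ1 j, γ2 j) : V1 × V2))) ((0 : V1), y b))) ↔
      ∃ (S : Finset A) (T : Finset B) (J : Finset (Fin t)),
        (S.Nonempty ∨ T.Nonempty) ∧
        ∑ a ∈ S, x a = ∑ j ∈ J, γ1 j ∧ ∑ b ∈ T, y b = ∑ j ∈ J, γ2 j :=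
  pushout_dependent_iff_zmod2_general γ1 γ2 x y
end

section
/- Let S1 and S2 be disjoint finite sets, t ∈ ℕ, and b1 : Fin t → S1, b2 : Fin t → S2 injective boundary labelings. Let v : S1 → V1 and v' : S1 → V1' be families of vectors in F2-vector spaces such that for every subset Y ⊆ S1, Σ_{y ∈ Y} v(y) = 0 if and only if Σ_{y ∈ Y} v'(y) = 0; and let w : S2 → V2 and w' : S2 → V2' satisfy the analogous condition on S2. Form W = (V1 × V2) / span{(v(b1 j), w(b2 j)) : j ∈ Fin t} and W' = (V1' × V2') / span{(v'(b1 j), w'(b2 j)) : j ∈ Fin t}, and map each element s ∈ S1 to the image of (v(s), 0) (resp. (v'(s), 0)) and each s ∈ S2 to the image of (0, w(s)) (resp. (0, w'(s))). Then for all X1 ⊆ S1 \ b1(Fin t) and X2 ⊆ S2 \ b2(Fin t), the family of images of the elements of X1 ∪ X2 in W is linearly dependent over F2 if and only if the family of their images in W' is linearly dependent. Hence, over F2, the matroid produced by the operation ⊕̄ does not depend on the chosen representations of the two boundaried matroids. -/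
/-!
Encode a choice of coefficients on the ground sets as an element of the free module
`(σ1 →₀ R) × (σ2 →₀ R)`. Its image in `W` vanishes exactly when it lies in the span of the
boundary pairs `(b1 j, b2 j)` plus the product of the kernels of the two representations, since
taking the preimage of the image of a submodule just adds the kernel. So the dependencies of the
pushout family are determined by those two kernels, over any ring. Over `F2` a coefficient vector
is the indicator of its support, so these kernels record exactly the zero-sum subsets.
-/

open Finsupp Submodule

theorem linearIndependent_comp_iff_of_ker_eq {ι R M N N' : Type*} [Ring R]
    [AddCommGroup M] [Module R M] [AddCommGroup N] [Module R N] [AddCommGroup N'] [Module R N']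
    {f : M →ₗ[R] N} {f' : M →ₗ[R] N'} (h : LinearMap.ker f = LinearMap.ker f') (e : ι → M) :
    LinearIndependent R (f ∘ e) ↔ LinearIndependent R (f' ∘ e) := by
  rw [linearIndependent_iff_ker, linearIndependent_iff_ker, linearCombination_linear_comp,
    linearCombination_linear_comp, LinearMap.ker_comp, LinearMap.ker_comp, h]

section Pushout

variable {R σ1 σ2 κ V1 V2 : Type*} [Ring R]
  [AddCommGroup V1] [Module R V1] [AddCommGroup V2] [Module R V2]
  (b1 : κ → σ1) (b2 : κ → σ2) (v : σ1 → V1) (w : σ2 → V2)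

theorem span_range_pair_eq_map_prodMap_linearCombination :
    span R (Set.range fun j => (v (b1 j), w (b2 j))) =
      (span R (Set.range fun j => (single (b1 j) (1 : R), single (b2 j) (1 : R)))).map
        ((linearCombination R v).prodMap (linearCombination R w)) := by
  rw [map_span, ← Set.range_comp]
  congr
  funext j
  simp

theorem ker_mkQ_comp_prodMap_linearCombination :
    LinearMap.ker ((span R (Set.range fun j => (v (b1 j), w (b2 j)))).mkQ ∘ₗ
        (linearCombination R v).prodMap (linearCombination R w)) =
      span R (Set.range fun j => (single (b1 j) (1 : R), single (b2 j) (1 : R))) ⊔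
        (LinearMap.ker (linearCombination R v)).prod (LinearMap.ker (linearCombination R w)) := by
  rw [LinearMap.ker_comp, ker_mkQ, span_range_pair_eq_map_prodMap_linearCombination,
    comap_map_eq, LinearMap.ker_prodMap]

theorem pushout_family_eq_comp {ι1 ι2 : Type*} (x1 : ι1 → σ1) (x2 : ι2 → σ2) :
    Sum.elim
        (fun i => Submodule.Quotient.mk (p := span R (Set.range fun j => (v (b1 j), w (b2 j))))
          (v (x1 i), (0 : V2)))
        (fun i => Submodule.Quotient.mk (p := span R (Set.range fun j => (v (b1 j), w (b2 j))))
          ((0 : V1), w (x2 i))) =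
      ((span R (Set.range fun j => (v (b1 j), w (b2 j)))).mkQ ∘ₗ
          (linearCombination R v).prodMap (linearCombination R w)) ∘
        Sum.elim (fun i => (single (x1 i) (1 : R), (0 : σ2 →₀ R)))
          (fun i => ((0 : σ1 →₀ R), single (x2 i) (1 : R))) := by
  funext i
  rcases i with i | i <;> simp

end Pushout

theorem linearIndependent_pushout_iff_of_ker_eq {R σ1 σ2 κ ι1 ι2 V1 V2 V1' V2' : Type*} [Ring R]
    [AddCommGroup V1] [Module R V1] [AddCommGroup V2] [Module R V2]
    [AddCommGroup V1'] [Module R V1'] [AddCommGroup V2'] [Module R V2']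
    (b1 : κ → σ1) (b2 : κ → σ2) {v : σ1 → V1} {v' : σ1 → V1'} {w : σ2 → V2} {w' : σ2 → V2'}
    (hv : LinearMap.ker (linearCombination R v) = LinearMap.ker (linearCombination R v'))
    (hw : LinearMap.ker (linearCombination R w) = LinearMap.ker (linearCombination R w'))
    (x1 : ι1 → σ1) (x2 : ι2 → σ2) :
    LinearIndependent R (Sum.elim
        (fun i => Submodule.Quotient.mk (p := span R (Set.range fun j => (v (b1 j), w (b2 j))))
          (v (x1 i), (0 : V2)))
        (fun i => Submodule.Quotient.mk (p := span R (Set.range fun j => (v (b1 j), w (b2 j))))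
          ((0 : V1), w (x2 i)))) ↔
      LinearIndependent R (Sum.elim
        (fun i => Submodule.Quotient.mk (p := span R (Set.range fun j => (v' (b1 j), w' (b2 j))))
          (v' (x1 i), (0 : V2')))
        (fun i => Submodule.Quotient.mk (p := span R (Set.range fun j => (v' (b1 j), w' (b2 j))))
          ((0 : V1'), w' (x2 i)))) := by
  rw [pushout_family_eq_comp, pushout_family_eq_comp]
  refine linearIndependent_comp_iff_of_ker_eq ?_ _
  rw [ker_mkQ_comp_prodMap_linearCombination, ker_mkQ_comp_prodMap_linearCombination, hv, hw]

section ZModTwo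

variable {σ V V' : Type*} [AddCommGroup V] [Module (ZMod 2) V]
  [AddCommGroup V'] [Module (ZMod 2) V']

theorem linearCombination_zmod_two_eq_sum_support (v : σ → V) (c : σ →₀ ZMod 2) :
    linearCombination (ZMod 2) v c = ∑ s ∈ c.support, v s := by
  rw [linearCombination_apply, Finsupp.sum]
  refine Finset.sum_congr rfl fun s hs => ?_
  have hc : c s = 1 := Fin.eq_one_of_ne_zero _ (mem_support_iff.mp hs)
  rw [hc, one_smul]

theorem ker_linearCombination_zmod_two_eq {v : σ → V} {v' : σ → V'}
    (hv : ∀ Y : Finset σ, ∑ s ∈ Y, v s = 0 ↔ ∑ s ∈ Y, v' s = 0) :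
    LinearMap.ker (linearCombination (ZMod 2) v) = LinearMap.ker (linearCombination (ZMod 2) v') := by
  ext c
  simp only [LinearMap.mem_ker, linearCombination_zmod_two_eq_sum_support]
  exact hv c.support

end ZModTwo

theorem pushout_zmod2_representation_independent_general {V1 V2 V1' V2' : Type*}
    [AddCommGroup V1] [Module (ZMod 2) V1] [AddCommGroup V2] [Module (ZMod 2) V2]
    [AddCommGroup V1'] [Module (ZMod 2) V1'] [AddCommGroup V2'] [Module (ZMod 2) V2']
    {σ1 σ2 : Type*} {t : ℕ}
    (b1 : Fin t → σ1) (b2 : Fin t → σ2)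
    (v : σ1 → V1) (v' : σ1 → V1') (w : σ2 → V2) (w' : σ2 → V2')
    (hv : ∀ Y : Finset σ1, (∑ s ∈ Y, v s = 0 ↔ ∑ s ∈ Y, v' s = 0))
    (hw : ∀ Y : Finset σ2, (∑ s ∈ Y, w s = 0 ↔ ∑ s ∈ Y, w' s = 0))
    (X1 : Set σ1) (X2 : Set σ2) :
    (¬ LinearIndependent (ZMod 2) (Sum.elim
        (fun s : X1 => Submodule.Quotient.mk
          (p := Submodule.span (ZMod 2)
            (Set.range fun j : Fin t => ((v (b1 j), w (b2 j)) : V1 × V2)))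
          (v s, (0 : V2)))
        (fun s : X2 => Submodule.Quotient.mk
          (p := Submodule.span (ZMod 2)
            (Set.range fun j : Fin t => ((v (b1 j), w (b2 j)) : V1 × V2)))
          ((0 : V1), w s)))) ↔
      (¬ LinearIndependent (ZMod 2) (Sum.elim
        (fun s : X1 => Submodule.Quotient.mk
          (p := Submodule.span (ZMod 2)
            (Set.range fun j : Fin t => ((v' (b1 j), w' (b2 j)) : V1' × V2')))
          (v' s, (0 : V2')))
        (fun s : X2 => Submodule.Quotient.mk
          (p := Submodule.span (ZMod 2)
            (Set.range fun j : Fin t => ((v' (b1 j), w' (b2 j)) : V1' × V2')))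
          ((0 : V1'), w' s)))) :=
  not_congr <| linearIndependent_pushout_iff_of_ker_eq b1 b2
    (ker_linearCombination_zmod_two_eq hv) (ker_linearCombination_zmod_two_eq hw)
    Subtype.val Subtype.val

/-- Over `F2`, the operation `⊕̄` does not depend on the chosen representations of the
two boundaried matroids. Let `σ1, σ2` be (disjoint) finite ground sets with injective
boundary labelings `b1 : Fin t → σ1`, `b2 : Fin t → σ2`. Suppose `v : σ1 → V1` and
`v' : σ1 → V1'` have the same zero-sum subsets (so they represent the same matroid
over `F2`), and likewise `w : σ2 → V2` and `w' : σ2 → V2'`. Form the quotients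
`W = (V1 × V2) / span {(v (b1 j), w (b2 j)) : j}` and
`W' = (V1' × V2') / span {(v' (b1 j), w' (b2 j)) : j}`, mapping each `s ∈ σ1` to the
image of `(v s, 0)` (resp. `(v' s, 0)`) and each `s ∈ σ2` to the image of `(0, w s)`
(resp. `(0, w' s)`). Then for all sets `X1`, `X2` of internal elements (disjoint from
the boundary images), the family of images of the elements of `X1 ∪ X2` in `W` is
linearly dependent iff the family of their images in `W'` is. -/
theorem pushout_zmod2_representation_independent {V1 V2 V1' V2' : Type*}
    [AddCommGroup V1] [Module (ZMod 2) V1] [AddCommGroup V2] [Module (ZMod 2) V2]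
    [AddCommGroup V1'] [Module (ZMod 2) V1'] [AddCommGroup V2'] [Module (ZMod 2) V2']
    {σ1 σ2 : Type*} [Fintype σ1] [Fintype σ2] {t : ℕ}
    (b1 : Fin t → σ1) (b2 : Fin t → σ2)
    (hb1 : Function.Injective b1) (hb2 : Function.Injective b2)
    (v : σ1 → V1) (v' : σ1 → V1') (w : σ2 → V2) (w' : σ2 → V2')
    (hv : ∀ Y : Finset σ1, (∑ s ∈ Y, v s = 0 ↔ ∑ s ∈ Y, v' s = 0))
    (hw : ∀ Y : Finset σ2, (∑ s ∈ Y, w s = 0 ↔ ∑ s ∈ Y, w' s = 0))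
    (X1 : Set σ1) (X2 : Set σ2)
    (hX1 : Disjoint X1 (Set.range b1)) (hX2 : Disjoint X2 (Set.range b2)) :
    (¬ LinearIndependent (ZMod 2) (Sum.elim
        (fun s : X1 => Submodule.Quotient.mk
          (p := Submodule.span (ZMod 2)
            (Set.range fun j : Fin t => ((v (b1 j), w (b2 j)) : V1 × V2)))
          (v s, (0 : V2)))
        (fun s : X2 => Submodule.Quotient.mk
          (p := Submodule.span (ZMod 2)
            (Set.range fun j : Fin t => ((v (b1 j), w (b2 j)) : V1 × V2)))
          ((0 : V1), w s)))) ↔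
      (¬ LinearIndependent (ZMod 2) (Sum.elim
        (fun s : X1 => Submodule.Quotient.mk
          (p := Submodule.span (ZMod 2)
            (Set.range fun j : Fin t => ((v' (b1 j), w' (b2 j)) : V1' × V2')))
          (v' s, (0 : V2')))
        (fun s : X2 => Submodule.Quotient.mk
          (p := Submodule.span (ZMod 2)
            (Set.range fun j : Fin t => ((v' (b1 j), w' (b2 j)) : V1' × V2')))
          ((0 : V1'), w' s)))) :=
  pushout_zmod2_representation_independent_general b1 b2 v v' w w' hv hw X1 X2
end

section
/- Let G be a simple graph on a finite vertex type V and let s be a set of edges of G. For an edge e of G, let its incidence vector over F2 = ZMod 2 be the function V → F2 taking value 1 exactly on the two endpoints of e (the column of the incidence matrix of G at e). Then the family of incidence vectors of the edges in s is linearly independent over F2 if and only if the spanning subgraph of G whose edge set is s is acyclic (contains no cycle). -/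
/-!
Over `F₂` a linear dependency among the columns is a nonempty finite set of edges whose columns
sum to zero, that is, in which every vertex lies on an even number of edges. The edge set of a
cycle has this property. Conversely, a nonempty finite acyclic edge set has a vertex of degree
one (the start of a longest path), so it does not.
-/

open Finset

theorem linearIndepOn_zmod_two_iff {ι M : Type*} [AddCommGroup M] [Module (ZMod 2) M]
    {v : ι → M} {s : Set ι} :
    LinearIndepOn (ZMod 2) v s ↔ ∀ t : Finset ι, ↑t ⊆ s → ∑ i ∈ t, v i = 0 → t = ∅ := by
  refine ⟨fun h t hts hsum => ?_, fun h => linearIndepOn_iff.mpr fun l hl hl0 => ?_⟩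
  · by_contra! ⟨i, hi⟩
    have := Fintype.linearIndependent_iff.mp (h.mono hts) 1
      (by simp only [Pi.one_apply, one_smul]; exact (sum_coe_sort t v).trans hsum) ⟨i, hi⟩
    exact one_ne_zero this
  · have hone : ∀ x : ZMod 2, x ≠ 0 → x = 1 := by decide
    have hsum : ∑ i ∈ l.support, v i = 0 := by
      rw [← hl0, Finsupp.linearCombination_apply, Finsupp.sum]
      refine sum_congr rfl fun i hi => ?_
      rw [hone _ (Finsupp.mem_support_iff.mp hi), one_smul]
    exact Finsupp.support_eq_empty.mp (h _ ((Finsupp.mem_supported _ _).mp hl) hsum)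

namespace SimpleGraph

variable {V : Type*} {G : SimpleGraph V}

theorem exists_isPath_forall_isPath_length_le [Finite G.edgeSet] [Nonempty V] :
    ∃ (u v : V) (p : G.Walk u v), p.IsPath ∧
      ∀ (u' v' : V) (q : G.Walk u' v'), q.IsPath → q.length ≤ p.length := by
  have := Fintype.ofFinite G.edgeSet
  let lengths : Set ℕ := {n | ∃ (u v : V) (p : G.Walk u v), p.IsPath ∧ p.length = n}
  have hbdd : BddAbove lengths := ⟨#G.edgeFinset, by
    rintro _ ⟨u, v, p, hp, rfl⟩
    exact hp.isTrail.length_le_card_edgeFinset⟩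
  have hne : lengths.Nonempty := ⟨0, Classical.arbitrary V, _, .nil, .nil, rfl⟩
  obtain ⟨u, v, p, hp, hlen⟩ := Nat.sSup_mem hne hbdd
  exact ⟨u, v, p, hp, fun u' v' q hq => hlen ▸ le_csSup hbdd ⟨u', v', q, hq, rfl⟩⟩

theorem IsAcyclic.exists_existsUnique_adj [Finite G.edgeSet] (hG : G.IsAcyclic) (hG₀ : G ≠ ⊥) :
    ∃ v, ∃! w, G.Adj v w := by
  obtain ⟨a, b, hab⟩ := ne_bot_iff_exists_adj.mp hG₀
  have : Nonempty V := ⟨a⟩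
  obtain ⟨u, v, p, hp, hmax⟩ := exists_isPath_forall_isPath_length_le (G := G)
  cases p with
  | nil => simpa using hmax a b (.cons hab .nil) (by simp [hab.ne])
  | cons hadj q =>
    refine ⟨u, _, hadj, fun x hx => ?_⟩
    by_cases hxp : x ∈ (Walk.cons hadj q).support
    · simpa using hG.eq_snd_of_adj_start hp hx hxp
    · have := hmax x v (.cons hx.symm (.cons hadj q)) (hp.cons hxp)
      simp at this

variable [DecidableEq V]

theorem Walk.IsCycle.even_card_filter_mem_edges {u : V} {c : G.Walk u u} (hc : c.IsCycle)
    (v : V) : Even #{e ∈ c.edges.toFinset | v ∈ e} := by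
  rw [hc.edges_nodup.card_eq_countP]
  exact (hc.isTrail.even_countP_edges_iff v).mpr fun h => absurd rfl h

theorem filter_mem_eq_singleton_of_existsUnique_adj {t : Finset (Sym2 V)}
    (ht : ∀ e ∈ t, ¬ e.IsDiag) {v w : V} (hw : (fromEdgeSet ↑t).Adj v w)
    (hu : ∀ x, (fromEdgeSet ↑t).Adj v x → x = w) : {e ∈ t | v ∈ e} = {s(v, w)} := by
  refine eq_singleton_iff_unique_mem.mpr
    ⟨mem_filter.mpr ⟨((fromEdgeSet_adj _).mp hw).1, Sym2.mem_mk_left _ _⟩, fun e he => ?_⟩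
  obtain ⟨het, hve⟩ := mem_filter.mp he
  obtain ⟨x, rfl⟩ := Sym2.mem_iff_exists.mp hve
  rw [hu x ((fromEdgeSet_adj _).mpr ⟨het, fun h => ht _ het (Sym2.mk_isDiag_iff.mpr h)⟩)]

theorem isAcyclic_fromEdgeSet_iff {s : Set (Sym2 V)} (hs : ∀ e ∈ s, ¬ e.IsDiag) :
    (fromEdgeSet s).IsAcyclic ↔
      ∀ t : Finset (Sym2 V), ↑t ⊆ s → (∀ v, Even #{e ∈ t | v ∈ e}) → t = ∅ := by
  refine ⟨fun h t hts heven => ?_, fun h u c hc => ?_⟩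
  · by_contra! ⟨e, he⟩
    have hacyc : (fromEdgeSet (t : Set (Sym2 V))).IsAcyclic := h.anti (fromEdgeSet_mono hts)
    have hedges : (fromEdgeSet (t : Set (Sym2 V))).edgeSet ⊆ t := by
      rw [edgeSet_fromEdgeSet]
      exact Set.sdiff_subset
    have : Finite (fromEdgeSet (t : Set (Sym2 V))).edgeSet :=
      (t.finite_toSet.subset hedges).to_subtype
    have hne : fromEdgeSet (t : Set (Sym2 V)) ≠ ⊥ :=
      edgeSet_nonempty.mp ⟨e, by rw [edgeSet_fromEdgeSet]; exact ⟨he, hs e (hts he)⟩⟩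
    obtain ⟨v, w, hw, hu⟩ := hacyc.exists_existsUnique_adj hne
    have hodd := heven v
    rw [filter_mem_eq_singleton_of_existsUnique_adj (fun e he => hs e (hts he)) hw hu] at hodd
    simp at hodd
  · have hsub : ↑c.edges.toFinset ⊆ s := fun e he => by
      have := c.edges_subset_edgeSet (List.mem_toFinset.mp he)
      rw [edgeSet_fromEdgeSet] at this
      exact this.1
    exact hc.not_nil (by simpa using h _ hsub hc.even_card_filter_mem_edges)

theorem sum_incMatrix_apply_eq_card_filter {R : Type*} [NonAssocSemiring R] [DecidableRel G.Adj]
    {t : Finset (Sym2 V)} (ht : ↑t ⊆ G.edgeSet) (v : V) :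
    ∑ e ∈ t, G.incMatrix R v e = #{e ∈ t | v ∈ e} := by
  simp only [incMatrix_apply', sum_boole]
  exact congrArg (fun n : ℕ => (n : R))
    (congrArg card (filter_congr fun e he => ⟨fun h => h.2, fun h => ⟨ht he, h⟩⟩))

end SimpleGraph

open Classical in
theorem incMatrix_linearIndependent_iff_acyclic_general {V : Type*}
    (G : SimpleGraph V) (s : Set (Sym2 V)) (hs : s ⊆ G.edgeSet) :
    LinearIndependent (ZMod 2)
        (fun e : s => fun v : V => G.incMatrix (ZMod 2) v (e : Sym2 V)) ↔
      (SimpleGraph.fromEdgeSet s).IsAcyclic := by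
  rw [SimpleGraph.isAcyclic_fromEdgeSet_iff fun e he => G.not_isDiag_of_mem_edgeSet (hs he)]
  refine (linearIndepOn_zmod_two_iff (v := fun e v => G.incMatrix (ZMod 2) v e) (s := s)).trans
    (forall₂_congr fun t hts => ?_)
  simp only [funext_iff, Finset.sum_apply, Pi.zero_apply,
    SimpleGraph.sum_incMatrix_apply_eq_card_filter (hts.trans hs), ZMod.natCast_eq_zero_iff_even]

open Classical in
/-- The cycle matroid of a simple graph `G` on a finite vertex type is represented over
`F2` by the columns of its incidence matrix: for a set `s` of edges of `G`, the family
of incidence vectors (columns of the incidence matrix over `ZMod 2`) of the edges in `s`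
is linearly independent iff the spanning subgraph with edge set `s` is acyclic. -/
theorem incMatrix_linearIndependent_iff_acyclic {V : Type*} [Fintype V]
    (G : SimpleGraph V) (s : Set (Sym2 V)) (hs : s ⊆ G.edgeSet) :
    LinearIndependent (ZMod 2)
        (fun e : s => fun v : V => G.incMatrix (ZMod 2) v (e : Sym2 V)) ↔
      (SimpleGraph.fromEdgeSet s).IsAcyclic :=
  incMatrix_linearIndependent_iff_acyclic_general G s hs
end

section
/- Let F be a field, V1 and V2 vector spaces over F, t ∈ ℕ, and γ1 : Fin t → V1, γ2 : Fin t → V2. Let W = (V1 × V2) / span_F{(γ1 j, −γ2 j) : j ∈ Fin t} with quotient map π, and define ι1(x) = π(x, 0), ι2(y) = π(0, y). Let x : A → V1 and y : B → V2 be families of vectors indexed by finite sets A and B. Then the combined family of images ι1 ∘ x on A and ι2 ∘ y on B is linearly dependent over F if and only if there exist coefficient functions α : A → F and β : B → F, not both identically zero, and c : Fin t → F such that Σ_{a ∈ A} α(a) · x(a) = Σ_{j} c(j) · γ1(j) and Σ_{b ∈ B} β(b) · y(b) = −Σ_{j} c(j) · γ2(j). -/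
/-! A dependence among the images in `W` lifts to a nontrivial combination of the vectors
`(x a, 0)` and `(0, y b)` lying in the span of the `(γ1 j, -γ2 j)`; the coefficients `c` of
that span element, read coordinatewise, are the signature. -/

theorem Submodule.not_linearIndependent_mk_iff {R M ι : Type*} [Ring R] [AddCommGroup M]
    [Module R M] [Fintype ι] (p : Submodule R M) (v : ι → M) :
    ¬ LinearIndependent R (fun i => Submodule.Quotient.mk (p := p) (v i)) ↔
      ∃ g : ι → R, g ≠ 0 ∧ ∑ i, g i • v i ∈ p := by
  simp only [Fintype.not_linearIndependent_iff, ← Submodule.mkQ_apply, ← map_smul, ← map_sum,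
    ← LinearMap.mem_ker, Submodule.ker_mkQ, Function.ne_iff, Pi.zero_apply]
  exact exists_congr fun g => and_comm

theorem Sum.exists_fun_iff_exists_elim {α β γ : Type*} {P : (α ⊕ β → γ) → Prop} :
    (∃ g, P g) ↔ ∃ f g, P (Sum.elim f g) :=
  ⟨fun ⟨g, h⟩ => ⟨g ∘ inl, g ∘ inr, by rwa [Sum.elim_comp_inl_inr]⟩, fun ⟨_, _, h⟩ => ⟨_, h⟩⟩

theorem Sum.elim_ne_zero_iff {α β γ : Type*} [Zero γ] {f : α → γ} {g : β → γ} :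
    Sum.elim f g ≠ 0 ↔ f ≠ 0 ∨ g ≠ 0 := by
  simp only [Function.ne_iff, Sum.exists, Sum.elim_inl, Sum.elim_inr, Pi.zero_apply]

theorem Fintype.sum_elim_smul_inl_inr {R M N A B : Type*} [Semiring R] [AddCommMonoid M]
    [Module R M] [AddCommMonoid N] [Module R N] [Fintype A] [Fintype B]
    (α : A → R) (β : B → R) (x : A → M) (y : B → N) :
    ∑ i, Sum.elim α β i • Sum.elim (fun a => (x a, (0 : N))) (fun b => ((0 : M), y b)) i =
      (∑ a, α a • x a, ∑ b, β b • y b) := by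
  ext <;> simp [Fintype.sum_sum_type, Prod.fst_sum, Prod.snd_sum]

theorem Submodule.prod_mem_span_range_iff {R M N ι : Type*} [Ring R] [AddCommGroup M]
    [Module R M] [AddCommGroup N] [Module R N] [Fintype ι] (γ1 : ι → M) (γ2 : ι → N)
    (u : M) (w : N) :
    (u, w) ∈ span R (Set.range fun j => (γ1 j, -γ2 j)) ↔
      ∃ c : ι → R, u = ∑ j, c j • γ1 j ∧ w = -∑ j, c j • γ2 j := by
  simp [mem_span_range_iff_exists_fun, Prod.ext_iff, Prod.fst_sum, Prod.snd_sum, eq_comm]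

/-- Signature characterization of dependence under the operation `⊕̄` over a field `F`:
let `W = (V1 × V2) / span {(γ1 j, -γ2 j) : j}`. The combined family of the images of
`x : A → V1` and `y : B → V2` in `W` is linearly dependent iff there are coefficient
functions `α : A → F`, `β : B → F`, not both identically zero, and `c : Fin t → F` such
that `∑ a, α a • x a = ∑ j, c j • γ1 j` and `∑ b, β b • y b = -∑ j, c j • γ2 j`. -/
theorem pushout_dependent_iff_signature {F V1 V2 : Type*} [Field F]
    [AddCommGroup V1] [Module F V1] [AddCommGroup V2] [Module F V2]
    {A B : Type*} [Fintype A] [Fintype B] {t : ℕ}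
    (γ1 : Fin t → V1) (γ2 : Fin t → V2) (x : A → V1) (y : B → V2) :
    ¬ LinearIndependent F (Sum.elim
        (fun a : A => Submodule.Quotient.mk
          (p := Submodule.span F
            (Set.range fun j : Fin t => ((γ1 j, -γ2 j) : V1 × V2))) (x a, (0 : V2)))
        (fun b : B => Submodule.Quotient.mk
          (p := Submodule.span F
            (Set.range fun j : Fin t => ((γ1 j, -γ2 j) : V1 × V2))) ((0 : V1), y b))) ↔
      ∃ (α : A → F) (β : B → F) (c : Fin t → F),
        (α ≠ 0 ∨ β ≠ 0) ∧
        ∑ a : A, α a • x a = ∑ j : Fin t, c j • γ1 j ∧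
        ∑ b : B, β b • y b = -∑ j : Fin t, c j • γ2 j := by
  rw [← Function.comp_def Submodule.Quotient.mk, ← Function.comp_def Submodule.Quotient.mk,
    ← Sum.comp_elim, Function.comp_def, Submodule.not_linearIndependent_mk_iff,
    Sum.exists_fun_iff_exists_elim]
  simp only [Sum.elim_ne_zero_iff, Fintype.sum_elim_smul_inl_inr,
    Submodule.prod_mem_span_range_iff, exists_and_left]
end
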